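/- Let R(E₆) = ℤ[ω₁,…,ω₆,y₃,y₄]/⟨g₂, g₃, g₄, g₅, r₆, r₈, r₉, r₁₂⟩, where g₂ = 4ω₂² − c₂, g₃ = 2y₃ + 2ω₂³ − c₃, g₄ = 3y₄ + ω₂⁴ − c₄, g₅ = 2ω₂²y₃ − ω₂c₄ + c₅, r₆ = y₃² − ω₂c₅ + 2c₆, r₈ = y₄(c₄ − 2ω₁y₃) − 2c₅y₃ − ω₂²c₆ + ω₂³c₅, r₉ = 2y₃c₆ − ω₂³c₆, r₁₂ = y₄³ − c₆². Then R(E₆) is generated, as a module over the subring generated by the images of ω₁,…,ω₆, by the images of 1, y₃, y₄ and y₄². -/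

import Mathlib

open MvPolynomial

noncomputable section

/-- The polynomial ring ℤ[ω₁,…,ω₆,y₃,y₄]:
    ωᵢ = X (i-1) for 1 ≤ i ≤ 6, y₃ = X 6, y₄ = X 7. -/
abbrev E6Poly : Type := MvPolynomial (Fin 8) ℤ

/-- t₁=ω₆, t₂=ω₅−ω₆, t₃=ω₄−ω₅, t₄=ω₃−ω₄+ω₂, t₅=ω₁−ω₃+ω₂, t₆=−ω₁+ω₂. -/
def E6t : Fin 6 → E6Poly :=
  ![X 5, X 4 - X 5, X 3 - X 4, X 2 - X 3 + X 1, X 0 - X 2 + X 1, -X 0 + X 1]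

/-- c_r = e_r(t₁,…,t₆), the r-th elementary symmetric polynomial in t₁,…,t₆. -/
def E6c (r : ℕ) : E6Poly :=
  (Finset.powersetCard r (Finset.univ : Finset (Fin 6))).sum fun s => s.prod E6t

/-- The ideal ⟨g₂, g₃, g₄, g₅, r₆, r₈, r₉, r₁₂⟩,
    with ω₁ = X 0, ω₂ = X 1, y₃ = X 6, y₄ = X 7. -/
def E6rels : Ideal E6Poly :=
  Ideal.span
    { 4 * X 1 ^ 2 - E6c 2,                                        -- g₂
      2 * X 6 + 2 * X 1 ^ 3 - E6c 3,                              -- g₃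
      3 * X 7 + X 1 ^ 4 - E6c 4,                                  -- g₄
      2 * X 1 ^ 2 * X 6 - X 1 * E6c 4 + E6c 5,                    -- g₅
      X 6 ^ 2 - X 1 * E6c 5 + 2 * E6c 6,                          -- r₆
      X 7 * (E6c 4 - 2 * X 0 * X 6) - 2 * E6c 5 * X 6
        - X 1 ^ 2 * E6c 6 + X 1 ^ 3 * E6c 5,                      -- r₈
      2 * X 6 * E6c 6 - X 1 ^ 3 * E6c 6,                          -- r₉
      X 7 ^ 3 - (E6c 6) ^ 2 }                                     -- r₁₂

/-- R(E₆) = ℤ[ω₁,…,ω₆,y₃,y₄]/⟨g₂,g₃,g₄,g₅,r₆,r₈,r₉,r₁₂⟩. -/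
abbrev RE6 : Type := E6Poly ⧸ E6rels

/-! Let `W` be the subring generated by the `ωᵢ` and `M = W·1 + W·y₃ + W·y₄ + W·y₄²`. Since
`R(E₆)` is generated as a `W`-algebra by `y₃` and `y₄` and `1 ∈ M`, it suffices that `M` is
stable under multiplication by `y₃` and `y₄`. This follows from `r₆` (`y₃² ∈ W`), `r₁₂`
(`y₄³ ∈ W`), and from `g₃`, `g₄`: they give `2y₃, 3y₄ ∈ W`, hence
`y₃y₄ = 3y₄·y₃ - 2y₃·y₄ ∈ W·y₃ + W·y₄`. -/

theorem Submodule.span_eq_top_of_mul_mem {R A : Type*} [CommSemiring R] [Semiring A]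
    [Algebra R A] {S T : Set A} (hT : Algebra.adjoin R T = ⊤) (hone : 1 ∈ span R S)
    (hmul : ∀ y ∈ T, ∀ x ∈ S, y * x ∈ span R S) : span R S = ⊤ := by
  have hstable : ∀ a ∈ Algebra.adjoin R T, ∀ x ∈ span R S, a * x ∈ span R S := by
    intro a ha
    induction ha using Algebra.adjoin_induction with
    | mem y hy =>
      intro x hx
      induction hx using Submodule.span_induction with
      | mem x hx => exact hmul y hy x hx
      | zero => simp
      | add x x' _ _ h h' => rw [mul_add]; exact add_mem h h'
      | smul r x _ h => rw [mul_smul_comm]; exact smul_mem _ r h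
    | algebraMap r => intro x hx; rw [← Algebra.smul_def]; exact smul_mem _ r hx
    | add a b _ _ ha hb => intro x hx; rw [add_mul]; exact add_mem (ha x hx) (hb x hx)
    | mul a b _ _ ha hb => intro x hx; rw [mul_assoc]; exact ha _ (hb x hx)
  refine eq_top_iff.2 fun a _ => ?_
  simpa using hstable a (hT ▸ Algebra.mem_top) 1 hone

theorem MvPolynomial.adjoin_range_comp_X_eq_top {R σ A : Type*} [CommSemiring R]
    [CommSemiring A] [Algebra R A] (f : MvPolynomial σ R →ₐ[R] A)
    (hf : Function.Surjective f) : Algebra.adjoin R (Set.range (f ∘ X)) = ⊤ := by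
  rw [Set.range_comp, Algebra.adjoin_image, adjoin_range_X, Algebra.map_top,
    AlgHom.range_eq_top]
  exact hf

theorem Subalgebra.mul_mem_span {R A : Type*} [CommSemiring R] [Semiring A] [Algebra R A]
    {B : Subalgebra R A} {S : Set A} {a x : A} (ha : a ∈ B) (hx : x ∈ Submodule.span B S) :
    a * x ∈ Submodule.span B S :=
  Submodule.smul_mem _ ⟨a, ha⟩ hx

local notation "π" => Ideal.Quotient.mk E6rels

def E6ωSubalgebra : Subalgebra ℤ RE6 :=
  Algebra.adjoin ℤ (Set.range fun i : Fin 6 => π (X (Fin.castLE (by norm_num) i)))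

local notation "𝒲" => E6ωSubalgebra

theorem E6_mk_X_mem {i : Fin 8} (hi : (i : ℕ) < 6) : π (X i) ∈ 𝒲 :=
  Algebra.subset_adjoin ⟨⟨i, hi⟩, rfl⟩

theorem E6_mk_t_mem (j : Fin 6) : π (E6t j) ∈ 𝒲 := by
  fin_cases j <;>
    simp only [E6t, Fin.isValue, Fin.zero_eta, Fin.mk_one, Fin.reduceFinMk, Matrix.cons_val_zero,
      Matrix.cons_val_one, Matrix.cons_val, map_add, map_sub, map_neg] <;>
    apply_rules [sub_mem, add_mem, neg_mem, E6_mk_X_mem] <;> decide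

theorem E6_mk_c_mem (r : ℕ) : π (E6c r) ∈ 𝒲 := by
  rw [E6c, map_sum]
  exact sum_mem fun s _ => by rw [map_prod]; exact prod_mem fun j _ => E6_mk_t_mem j

theorem E6_g₃ : 2 * π (X 6) + 2 * π (X 1) ^ 3 = π (E6c 3) := by
  have h : π (2 * X 6 + 2 * X 1 ^ 3 - E6c 3) = 0 :=
    Ideal.Quotient.eq_zero_iff_mem.2 (Ideal.subset_span (by simp))
  simp only [map_sub, map_add, map_mul, map_pow, map_ofNat] at h
  linear_combination h

theorem E6_g₄ : 3 * π (X 7) + π (X 1) ^ 4 = π (E6c 4) := by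
  have h : π (3 * X 7 + X 1 ^ 4 - E6c 4) = 0 :=
    Ideal.Quotient.eq_zero_iff_mem.2 (Ideal.subset_span (by simp))
  simp only [map_sub, map_add, map_mul, map_pow, map_ofNat] at h
  linear_combination h

theorem E6_r₆ : π (X 6) ^ 2 = π (X 1) * π (E6c 5) - 2 * π (E6c 6) := by
  have h : π (X 6 ^ 2 - X 1 * E6c 5 + 2 * E6c 6) = 0 :=
    Ideal.Quotient.eq_zero_iff_mem.2 (Ideal.subset_span (by simp))
  simp only [map_sub, map_add, map_mul, map_pow, map_ofNat] at h
  linear_combination h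

theorem E6_r₁₂ : π (X 7) ^ 3 = π (E6c 6) ^ 2 := by
  have h : π (X 7 ^ 3 - E6c 6 ^ 2) = 0 :=
    Ideal.Quotient.eq_zero_iff_mem.2 (Ideal.subset_span (by simp))
  simp only [map_sub, map_pow] at h
  linear_combination h

theorem E6_exists_y₃_mul_y₄_eq :
    ∃ a ∈ 𝒲, ∃ b ∈ 𝒲, π (X 6) * π (X 7) = a * π (X 6) - b * π (X 7) := by
  have hω₂ : π (X 1) ∈ 𝒲 := E6_mk_X_mem (by decide)
  refine ⟨_, sub_mem (E6_mk_c_mem 4) (pow_mem hω₂ 4),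
    _, sub_mem (E6_mk_c_mem 3) (mul_mem (ofNat_mem _ 2) (pow_mem hω₂ 3)), ?_⟩
  linear_combination π (X 6) * E6_g₄ - π (X 7) * E6_g₃

theorem E6_adjoin_y₃_y₄_eq_top : Algebra.adjoin 𝒲 {π (X 6), π (X 7)} = ⊤ := by
  refine Subalgebra.restrictScalars_injective ℤ ?_
  rw [Subalgebra.restrictScalars_top, E6ωSubalgebra, ← Algebra.adjoin_union_eq_adjoin_adjoin,
    eq_top_iff, ← adjoin_range_comp_X_eq_top _ (Ideal.Quotient.mkₐ_surjective ℤ E6rels)]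
  refine Algebra.adjoin_mono ?_
  rintro _ ⟨i, rfl⟩
  rcases Nat.lt_or_ge i 6 with hi | hi
  · exact Or.inl ⟨⟨i, hi⟩, rfl⟩
  · obtain rfl | rfl : i = 6 ∨ i = 7 := by omega
    exacts [Or.inr (Or.inl rfl), Or.inr (Or.inr rfl)]

local notation "𝒮" => Submodule.span 𝒲 ({1, π (X 6), π (X 7), π (X 7 ^ 2)} : Set RE6)

theorem E6_mul_mem_span {y x : RE6} (hy : y ∈ ({π (X 6), π (X 7)} : Set RE6))
    (hx : x ∈ ({1, π (X 6), π (X 7), π (X 7 ^ 2)} : Set RE6)) : y * x ∈ 𝒮 := by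
  have hgen : ∀ {z}, z ∈ ({1, π (X 6), π (X 7), π (X 7 ^ 2)} : Set RE6) → z ∈ 𝒮 :=
    fun hz => Submodule.subset_span hz
  have hscalar : ∀ {a}, a ∈ 𝒲 → a ∈ 𝒮 := fun ha => by
    simpa using Subalgebra.mul_mem_span ha (hgen (Set.mem_insert 1 _))
  obtain ⟨a, ha, b, hb, hab⟩ := E6_exists_y₃_mul_y₄_eq
  have hy₃y₄ : π (X 6) * π (X 7) ∈ 𝒮 := by
    rw [hab]
    exact sub_mem (Subalgebra.mul_mem_span ha (hgen (by simp)))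
      (Subalgebra.mul_mem_span hb (hgen (by simp)))
  rcases hy with rfl | rfl <;> rcases hx with rfl | rfl | rfl | rfl
  · simpa using hgen (by simp)
  · rw [← sq, E6_r₆]
    exact hscalar (sub_mem (mul_mem (E6_mk_X_mem (by decide)) (E6_mk_c_mem 5))
      (mul_mem (ofNat_mem _ 2) (E6_mk_c_mem 6)))
  · exact hy₃y₄
  · have h : π (X 6) * π (X 7 ^ 2) = a * (π (X 6) * π (X 7)) - b * π (X 7 ^ 2) := by
      rw [map_pow]; linear_combination π (X 7) * hab
    rw [h]
    exact sub_mem (Subalgebra.mul_mem_span ha hy₃y₄) (Subalgebra.mul_mem_span hb (hgen (by simp)))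
  · simpa using hgen (by simp)
  · rw [mul_comm]; exact hy₃y₄
  · rw [← map_mul, ← sq]; exact hgen (by simp)
  · rw [map_pow, ← pow_succ', E6_r₁₂]
    exact hscalar (pow_mem (E6_mk_c_mem 6) 2)

/-- Proposition 1 for G = E₆: R(E₆) is generated, as a module over the subring
    generated by the images of ω₁,…,ω₆, by the images of 1, y₃, y₄ and y₄². -/
theorem RE6_spanned_by_one_y3_y4_y4sq :
    Submodule.span
      (Algebra.adjoin ℤ
        (Set.range fun i : Fin 6 =>
          Ideal.Quotient.mk E6rels (X (Fin.castLE (by norm_num) i))))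
      ({1, Ideal.Quotient.mk E6rels (X 6), Ideal.Quotient.mk E6rels (X 7),
        Ideal.Quotient.mk E6rels (X 7 ^ 2)} : Set RE6) = ⊤ :=
  Submodule.span_eq_top_of_mul_mem E6_adjoin_y₃_y₄_eq_top (Submodule.subset_span (by simp))
    fun _ hy _ hx => E6_mul_mem_span hy hx
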